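/- Let G be a path or cycle graph, and let V' be a subset of V(G) such that G[V'] is connected. Let V' be partitioned into V_1 and V_2. Then cc(V_1) ≤ cc(V_2) + 1, where cc denotes the number of connected components of the induced subgraph. -/

import Mathlib

/-!
A path is the Hasse diagram of a finite linear order, and there a connected induced subgraph is
an interval. Send each component of `G[V₁]` to the component of `G[V₂]` containing the vertex
just above its maximum, or to `none` if there is none. This is injective: if the maximum of `c`
lies below that of `c'`, the vertex above it is in `V₂` (by convexity of `V₁ ∪ V₂` and maximality),
and a component of `V₂` that contained it and also reached beyond the maximum of `c'` would contain
that maximum. Hence `cc(V₁) ≤ cc(V₂) + 1`.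

A cycle is cut at an edge lying in neither `G[V₁]` nor `G[V₂]`: at a vertex outside `V₁ ∪ V₂`,
or, when `V₁ ∪ V₂` is everything, at an edge from `V₂` to `V₁`. Rotating the cut to the edge
between the last vertex and `0` turns the cycle into a path without changing `G[V₁]`, `G[V₂]`,
or the connectivity of `G[V₁ ∪ V₂]`.
-/

/-- A set of vertices is independent: no two of its vertices are adjacent. -/
def IsIndep {V : Type*} (G : SimpleGraph V) (I : Set V) : Prop :=
  ∀ ⦃a⦄, a ∈ I → ∀ ⦃b⦄, b ∈ I → ¬ G.Adj a b

/-- The number of connected components of the subgraph induced by `S`. -/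
noncomputable def cc {V : Type*} (G : SimpleGraph V) (S : Set V) : ℕ :=
  Nat.card (G.induce S).ConnectedComponent

lemma Fin.val_add_one_eq_or_of_val_sub_eq_one {m : ℕ} {u v : Fin (m + 1)}
    (h : (u - v).val = 1) : v.val + 1 = u.val ∨ u = 0 ∧ v = Fin.last m := by
  rw [Fin.ext_iff, Fin.ext_iff, Fin.val_zero, Fin.val_last]
  rcases le_or_gt v u with hvu | huv
  · rw [Fin.coe_sub_iff_le.mpr hvu] at h
    omega
  · rw [Fin.coe_sub_iff_lt.mpr huv] at h
    omega

lemma Fin.eq_univ_of_add_one_mem {m : ℕ} {S : Set (Fin (m + 1))} {z : Fin (m + 1)} (hz : z ∈ S)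
    (hS : ∀ x ∈ S, x + 1 ∈ S) : S = Set.univ := by
  have hshift : ∀ k : Fin (m + 1), z + k ∈ S := Fin.induction (by simpa using hz)
    fun k hk => by simpa [← Fin.coeSucc_eq_succ, ← add_assoc] using hS _ hk
  exact Set.eq_univ_of_forall fun x => by simpa using hshift (x - z)

namespace SimpleGraph

def Iso.induceImage {V W : Type*} {G : SimpleGraph V} {G' : SimpleGraph W} (e : G ≃g G')
    (S : Set V) : G.induce S ≃g G'.induce (e '' S) where
  toEquiv := e.toEquiv.image S
  map_rel_iff' := e.map_adj_iff

namespace ConnectedComponent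

variable {V : Type*} [LinearOrder V] [Finite V] {G : SimpleGraph V}

noncomputable def maxVert (c : G.ConnectedComponent) : V :=
  (c.supp.exists_max_image id c.supp.toFinite c.nonempty_supp).choose

lemma maxVert_mem_supp (c : G.ConnectedComponent) : c.maxVert ∈ c.supp :=
  (c.supp.exists_max_image id c.supp.toFinite c.nonempty_supp).choose_spec.1

lemma le_maxVert {c : G.ConnectedComponent} {v : V} (hv : v ∈ c.supp) : v ≤ c.maxVert :=
  (c.supp.exists_max_image id c.supp.toFinite c.nonempty_supp).choose_spec.2 v hv

lemma maxVert_injective : Function.Injective (maxVert : G.ConnectedComponent → V) :=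
  fun c c' h => by rw [← c.maxVert_mem_supp, ← c'.maxVert_mem_supp, h]

end ConnectedComponent

lemma hasse_induce_mem_of_reachable {α : Type*} [LinearOrder α] {S : Set α} {x y : S}
    (h : ((hasse α).induce S).Reachable x y) {k : α} (hxk : x ≤ k) (hky : k ≤ y) : k ∈ S := by
  obtain ⟨w⟩ := h
  induction w with
  | nil => exact le_antisymm hky hxk ▸ Subtype.prop _
  | @cons u v _ huv _ ih =>
    rcases hxk.eq_or_lt with rfl | hlt
    · exact u.2
    rcases hasse_adj.mp huv with huv | hvu
    · exact ih (huv.ge_of_gt hlt) hky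
    · exact ih (hvu.lt.trans hlt).le hky

def cycleGraph.addRightIso (n : ℕ) [NeZero n] (k : Fin n) : cycleGraph n ≃g cycleGraph n where
  toEquiv := Equiv.addRight k
  map_rel_iff' := by simp [cycleGraph_adj']

lemma pathGraph_adj_or_eq_of_cycleGraph_adj {m : ℕ} {u v : Fin (m + 1)}
    (h : (cycleGraph (m + 1)).Adj u v) :
    (pathGraph (m + 1)).Adj u v ∨ s(u, v) = s(0, Fin.last m) := by
  rw [pathGraph_adj, Sym2.eq_iff]
  rcases cycleGraph_adj'.mp h with h | h <;>
  rcases Fin.val_add_one_eq_or_of_val_sub_eq_one h with h | h <;> tauto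

lemma induce_cycleGraph_eq_induce_pathGraph {m : ℕ} {S : Set (Fin (m + 1))}
    (hS : 0 ∉ S ∨ Fin.last m ∉ S) :
    (cycleGraph (m + 1)).induce S = (pathGraph (m + 1)).induce S := by
  ext ⟨u, hu⟩ ⟨v, hv⟩
  refine ⟨fun h => (pathGraph_adj_or_eq_of_cycleGraph_adj h).resolve_right ?_,
    fun h => pathGraph_le_cycleGraph h⟩
  rw [Sym2.eq_iff]
  rintro (⟨rfl, rfl⟩ | ⟨rfl, rfl⟩) <;> tauto

lemma cycleGraph.zero_mem_image_addRightIso_iff {m : ℕ} {z : Fin (m + 1)}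
    {S : Set (Fin (m + 1))} :
    0 ∈ cycleGraph.addRightIso (m + 1) (-(z + 1)) '' S ↔ z + 1 ∈ S := by
  simp [cycleGraph.addRightIso]

lemma cycleGraph.last_mem_image_addRightIso_iff {m : ℕ} {z : Fin (m + 1)}
    {S : Set (Fin (m + 1))} :
    Fin.last m ∈ cycleGraph.addRightIso (m + 1) (-(z + 1)) '' S ↔ z ∈ S := by
  simp [cycleGraph.addRightIso, add_left_comm _ z, Fin.last_add_one]

end SimpleGraph

open SimpleGraph

section Components

variable {V W : Type*} {G : SimpleGraph V} {G' : SimpleGraph W}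

lemma cc_empty : cc G ∅ = 0 := by
  simp [cc]

lemma cc_le_one {S : Set V} (h : (G.induce S).Preconnected) : cc G S ≤ 1 :=
  have := h.subsingleton_connectedComponent
  Finite.card_le_one_iff_subsingleton.mpr this

lemma cc_image (e : G ≃g G') (S : Set V) : cc G' (e '' S) = cc G S :=
  Nat.card_congr (e.induceImage S).connectedComponentEquiv.symm

end Components

section Hasse

variable {α : Type*} [LinearOrder α] [Finite α] {V₁ V₂ : Set α}

lemma notMem_of_maxVert_covBy (c : ((hasse α).induce V₁).ConnectedComponent) {w : α}
    (hw : (c.maxVert : α) ⋖ w) : w ∉ V₁ := fun hw₁ =>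
  have hadj : ((hasse α).induce V₁).Adj c.maxVert ⟨w, hw₁⟩ := hasse_adj.mpr (Or.inl hw)
  hw.lt.not_ge <| ConnectedComponent.le_maxVert <|
    (c.mem_supp_congr_adj hadj).mp c.maxVert_mem_supp

variable (V₁ V₂) in
noncomputable def nextComponent (c : ((hasse α).induce V₁).ConnectedComponent) :
    Option ((hasse α).induce V₂).ConnectedComponent :=
  open Classical in
  if h : ∃ w : V₂, (c.maxVert : α) ⋖ w then some (connectedComponentMk _ h.choose) else none

lemma nextComponent_injective (hdisj : Disjoint V₁ V₂)
    (hconn : ((hasse α).induce (V₁ ∪ V₂)).Preconnected) :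
    Function.Injective (nextComponent V₁ V₂) := by
  have lt_imp_ne : ∀ c c', c.maxVert < c'.maxVert →
      nextComponent V₁ V₂ c ≠ nextComponent V₁ V₂ c' := by
    intro c c' hlt
    obtain ⟨w, hcw, hwc'⟩ := exists_covBy_le_of_lt (α := α) hlt
    have hw : w ∈ V₂ := (hasse_induce_mem_of_reachable
      (hconn ⟨_, Or.inl c.maxVert.2⟩ ⟨_, Or.inl c'.maxVert.2⟩) hcw.lt.le hwc').resolve_left
      (notMem_of_maxVert_covBy c hcw)
    have hex : ∃ w : V₂, (c.maxVert : α) ⋖ w := ⟨⟨w, hw⟩, hcw⟩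
    rw [nextComponent, nextComponent, dif_pos hex]
    split_ifs with hex'
    · rw [ne_eq, Option.some_inj, ConnectedComponent.eq]
      intro hreach
      exact Set.disjoint_left.mp hdisj c'.maxVert.2 <| hasse_induce_mem_of_reachable hreach
        (hex.choose_spec.ge_of_gt hlt) hex'.choose_spec.lt.le
    · exact Option.some_ne_none _
  intro c c' h
  by_contra hne
  rcases lt_or_gt_of_ne (ConnectedComponent.maxVert_injective.ne hne) with hlt | hlt
  · exact lt_imp_ne c c' hlt h
  · exact lt_imp_ne c' c hlt h.symm

theorem cc_hasse_le (hdisj : Disjoint V₁ V₂)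
    (hconn : ((hasse α).induce (V₁ ∪ V₂)).Preconnected) :
    cc (hasse α) V₁ ≤ cc (hasse α) V₂ + 1 := by
  calc cc (hasse α) V₁ ≤ Nat.card (Option ((hasse α).induce V₂).ConnectedComponent) :=
        Nat.card_le_card_of_injective _ (nextComponent_injective hdisj hconn)
    _ = cc (hasse α) V₂ + 1 := Finite.card_option

end Hasse

lemma cc_cycleGraph_le_of_pathGraph {m : ℕ} {V₁ V₂ : Set (Fin (m + 1))} (hdisj : Disjoint V₁ V₂)
    (h₁ : 0 ∉ V₁ ∨ Fin.last m ∉ V₁) (h₂ : 0 ∉ V₂ ∨ Fin.last m ∉ V₂)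
    (hconn : ((pathGraph (m + 1)).induce (V₁ ∪ V₂)).Preconnected) :
    cc (cycleGraph (m + 1)) V₁ ≤ cc (cycleGraph (m + 1)) V₂ + 1 := by
  rw [cc, cc, induce_cycleGraph_eq_induce_pathGraph h₁, induce_cycleGraph_eq_induce_pathGraph h₂]
  exact cc_hasse_le hdisj hconn

/-- The rotation sends `z + 1` to `0` and `z` to the last vertex, so the cycle edge `{z, z + 1}`
becomes the one edge missing from the path. -/
lemma cc_cycleGraph_le_of_cut {m : ℕ} {V₁ V₂ : Set (Fin (m + 1))} (hdisj : Disjoint V₁ V₂)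
    (z : Fin (m + 1)) (h₁ : z ∉ V₁ ∨ z + 1 ∉ V₁) (h₂ : z ∉ V₂ ∨ z + 1 ∉ V₂)
    (hconn : ((pathGraph (m + 1)).induce
      (cycleGraph.addRightIso (m + 1) (-(z + 1)) '' (V₁ ∪ V₂))).Preconnected) :
    cc (cycleGraph (m + 1)) V₁ ≤ cc (cycleGraph (m + 1)) V₂ + 1 := by
  set e := cycleGraph.addRightIso (m + 1) (-(z + 1))
  have hcut : ∀ S : Set (Fin (m + 1)), z ∉ S ∨ z + 1 ∉ S → 0 ∉ e '' S ∨ Fin.last m ∉ e '' S := by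
    intro S hS
    rwa [cycleGraph.zero_mem_image_addRightIso_iff, cycleGraph.last_mem_image_addRightIso_iff,
      or_comm]
  rw [← cc_image e V₁, ← cc_image e V₂]
  exact cc_cycleGraph_le_of_pathGraph ((Set.disjoint_image_iff e.injective).mpr hdisj)
    (hcut V₁ h₁) (hcut V₂ h₂) (by rwa [Set.image_union] at hconn)

lemma cc_cycleGraph_le_of_union_eq_univ {m : ℕ} {V₁ V₂ : Set (Fin (m + 1))}
    (hdisj : Disjoint V₁ V₂) (huniv : V₁ ∪ V₂ = Set.univ) :
    cc (cycleGraph (m + 1)) V₁ ≤ cc (cycleGraph (m + 1)) V₂ + 1 := by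
  by_cases hcut : ∃ z ∈ V₂, z + 1 ∈ V₁
  · obtain ⟨z, hz₂, hz₁⟩ := hcut
    refine cc_cycleGraph_le_of_cut hdisj z (Or.inl (Set.disjoint_right.mp hdisj hz₂))
      (Or.inr (Set.disjoint_left.mp hdisj hz₁)) ?_
    rw [huniv, Set.image_univ_of_surjective (RelIso.surjective _)]
    exact (induceUnivIso _).preconnected_iff.mpr (pathGraph_preconnected _)
  push Not at hcut
  rcases V₂.eq_empty_or_nonempty with rfl | ⟨z, hz⟩
  · rw [Set.union_empty] at huniv
    subst huniv
    exact (cc_le_one ((induceUnivIso _).preconnected_iff.mpr cycleGraph_preconnected)).trans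
      le_add_self
  · have hV₂ : V₂ = Set.univ := Fin.eq_univ_of_add_one_mem hz fun x hx =>
      ((huniv ▸ Set.mem_univ (x + 1) : x + 1 ∈ V₁ ∪ V₂)).resolve_left (hcut x hx)
    have hV₁ : V₁ = ∅ := by simpa [hV₂] using hdisj
    simp [hV₁, cc_empty]

theorem cc_cycleGraph_le {n : ℕ} {V₁ V₂ : Set (Fin n)} (hdisj : Disjoint V₁ V₂)
    (hconn : ((cycleGraph n).induce (V₁ ∪ V₂)).Preconnected) :
    cc (cycleGraph n) V₁ ≤ cc (cycleGraph n) V₂ + 1 := by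
  cases n with
  | zero => simp [Set.eq_empty_of_isEmpty V₁, cc_empty]
  | succ m =>
    by_cases huniv : V₁ ∪ V₂ = Set.univ
    · exact cc_cycleGraph_le_of_union_eq_univ hdisj huniv
    obtain ⟨z, hz⟩ := (Set.ne_univ_iff_exists_notMem _).mp huniv
    refine cc_cycleGraph_le_of_cut hdisj z (Or.inl fun h => hz (Or.inl h))
      (Or.inl fun h => hz (Or.inr h)) ?_
    rw [← induce_cycleGraph_eq_induce_pathGraph
      (Or.inr (cycleGraph.last_mem_image_addRightIso_iff.not.mpr hz))]
    exact (SimpleGraph.Iso.induceImage _ _).preconnected_iff.mp hconn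

/-- On a path or a cycle, if `G[V₁ ∪ V₂]` is connected with `V₁` and `V₂` disjoint, then
`cc(V₁) ≤ cc(V₂) + 1`. -/
theorem stmt_10 {n : ℕ} (G : SimpleGraph (Fin n))
    (hG : G = SimpleGraph.pathGraph n ∨ G = SimpleGraph.cycleGraph n)
    (V₁ V₂ : Set (Fin n)) (hdisj : Disjoint V₁ V₂)
    (hconn : (G.induce (V₁ ∪ V₂)).Connected) :
    cc G V₁ ≤ cc G V₂ + 1 := by
  rcases hG with rfl | rfl
  · exact cc_hasse_le hdisj hconn.preconnected
  · exact cc_cycleGraph_le hdisj hconn.preconnected
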